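/- For every real number x ≥ 1, the sequence m ↦ C m x of truncated cube-root nested radicals is monotonically increasing in m. -/
import Mathlib


noncomputable def C : ℕ → ℝ → ℝ
  | 0, _ => 0
  | m + 1, y => (1 + 3 * y + y ^ 2 * C m (y + 2)) ^ (1 / 3 : ℝ)

lemma C_nonneg : ∀ (m : ℕ) (y : ℝ), 1 ≤ y → 0 ≤ C m y := by
  intro m
  induction m with
  | zero => intro y _; simp [C]
  | succ n ih =>
    intro y hy
    have h1 : 0 ≤ 1 + 3 * y + y ^ 2 * C n (y + 2) := by
      have := ih (y + 2) (by linarith)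
      nlinarith
    exact Real.rpow_nonneg h1 _

lemma C_step : ∀ (m : ℕ) (y : ℝ), 1 ≤ y → C m y ≤ C (m + 1) y := by
  intro m
  induction m with
  | zero =>
    intro y hy
    simp only [C]
    exact Real.rpow_nonneg (by nlinarith) _
  | succ n ih =>
    intro y hy
    have hin : 0 ≤ 1 + 3 * y + y ^ 2 * C n (y + 2) := by
      have := C_nonneg n (y + 2) (by linarith)
      nlinarith
    have hle : 1 + 3 * y + y ^ 2 * C n (y + 2) ≤
        1 + 3 * y + y ^ 2 * C (n + 1) (y + 2) := by
      have := ih (y + 2) (by linarith)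
      nlinarith
    exact Real.rpow_le_rpow hin hle (by norm_num)

theorem nested_cbrt_monotone (x : ℝ) (hx : 1 ≤ x) :
    Monotone (fun m => C m x) := by
  apply monotone_nat_of_le_succ
  intro n
  exact C_step n x hx
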